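/- arXiv:1201.5830 — 3 statements merged into one kernel-verified Lean document; each statement's English description precedes it below -/
import Mathlib

section
/- Let W be a finite-dimensional real vector space with a nondegenerate symmetric bilinear form ⟨·,·⟩ of signature (4,m) with m ≥ 1. Let υ⁰, υ ∈ W satisfy ⟨υ⁰,υ⁰⟩ = ⟨υ,υ⟩ = 0 and ⟨υ⁰,υ⟩ = 1. Let x ⊆ W be a 4-dimensional subspace on which the form is positive definite, with an orthogonal decomposition x = Ω ⊕ ℧ into 2-dimensional subspaces such that ⟨z,υ⟩ = ⟨z,υ⁰⟩ = 0 for all z ∈ Ω. Then there exist ω, B ∈ υ^⊥ ∩ (υ⁰)^⊥ and V ∈ ℝ with V > 0 and ⟨ω,ω⟩ > 0 such that ℧ = span_ℝ{ ω − ⟨B,ω⟩υ , υ⁰ + B + (V − ½⟨B,B⟩)υ }. Moreover B and V are uniquely determined by ℧, and ω is unique up to a nonzero real scalar. -/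
/-!
The functional `⟨·, υ⟩` cannot vanish on `℧`: otherwise it vanishes on `x = Ω ⊔ ℧`, and
`x ⊔ ℝυ` is a 5-dimensional positive semidefinite subspace, which Sylvester's law of inertia
forbids in signature `(4, m)`. Hence `℧` has an orthogonal basis `e₁, e₂` with `⟨e₁, υ⟩ = 0`
and `⟨e₂, υ⟩ = 1`; projecting onto `υ^⊥ ∩ (υ⁰)^⊥` gives `ω` and `B`, and `V = ½⟨e₂, e₂⟩`.
Conversely, these two normalisations determine `e₂` and determine `e₁` up to a scalar, and the
projection recovers `B` and `ω` from them.
-/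

open Module Submodule

section Signature

open QuadraticMap QuadraticForm

variable {K W : Type*} [Field K] [LinearOrder K] [IsStrictOrderedRing K]
  [AddCommGroup W] [Module K W] {form : W →ₗ[K] W →ₗ[K] K} {ι κ : Type*} [Fintype ι] [Fintype κ]

theorem card_le_sigNeg_of_basis (hsymm : ∀ x y, form x y = form y x)
    (b : Basis (ι ⊕ κ) K W) (horth : ∀ i j, i ≠ j → form (b i) (b j) = 0)
    (hneg : ∀ j, form (b (.inr j)) (b (.inr j)) < 0) :
    Fintype.card κ ≤ sigNeg (LinearMap.BilinMap.toQuadraticMap form) := by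
  set Q := LinearMap.BilinMap.toQuadraticMap form
  have : Invertible (2 : K) := invertibleOfNonzero two_ne_zero
  have hrepr : Q.basisRepr b = weightedSumSquares K fun k => Q (b k) :=
    basisRepr_eq_of_iIsOrtho Q b (by rw [associated_left_inverse K hsymm]; exact horth)
  have hequiv : Equivalent Q (weightedSumSquares K fun k => Q (b k)) :=
    hrepr ▸ ⟨Q.isometryEquivBasisRepr b⟩
  rw [sigNeg_of_equiv_weightedSumSquares hequiv, ← Nat.card_eq_fintype_card,
    ← Set.ncard_range_of_injective Sum.inr_injective]
  refine Set.ncard_le_ncard ?_ (Set.toFinite _)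
  rintro _ ⟨j, rfl⟩
  exact hneg j

theorem finrank_le_card_of_nonneg [FiniteDimensional K W] (hsymm : ∀ x y, form x y = form y x)
    (b : Basis (ι ⊕ κ) K W) (horth : ∀ i j, i ≠ j → form (b i) (b j) = 0)
    (hneg : ∀ j, form (b (.inr j)) (b (.inr j)) < 0)
    {S : Submodule K W} (hS : ∀ w ∈ S, 0 ≤ form w w) :
    finrank K S ≤ Fintype.card ι := by
  have := sigPos_add_finrank_le_of_nonpos (Q := -LinearMap.BilinMap.toQuadraticMap form) (V := S)
    (fun w hw => by simpa using hS w hw)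
  rw [sigPos_neg, finrank_eq_card_basis b, Fintype.card_sum] at this
  have := card_le_sigNeg_of_basis hsymm b horth hneg
  omega

theorem finrank_add_one_le_card_of_le_ker [FiniteDimensional K W]
    (hsymm : ∀ x y, form x y = form y x)
    (b : Basis (ι ⊕ κ) K W) (horth : ∀ i j, i ≠ j → form (b i) (b j) = 0)
    (hneg : ∀ j, form (b (.inr j)) (b (.inr j)) < 0)
    {x : Submodule K W} (hx : ∀ w ∈ x, w ≠ 0 → 0 < form w w)
    {υ : W} (hυ : form υ υ = 0) (hυ_ne : υ ≠ 0) (hxυ : x ≤ LinearMap.ker (form.flip υ)) :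
    finrank K x + 1 ≤ Fintype.card ι := by
  have hx_nonneg : ∀ w ∈ x, 0 ≤ form w w := fun w hw => by
    rcases eq_or_ne w 0 with rfl | hw0
    · simp
    · exact (hx w hw hw0).le
  have hdisj : Disjoint x (K ∙ υ) :=
    (disjoint_span_singleton' hυ_ne).mpr fun hυx => (hx υ hυx hυ_ne).ne' hυ
  have hrank : finrank K ↥(x ⊔ K ∙ υ) = finrank K x + 1 := by
    have := finrank_sup_add_finrank_inf_eq x (K ∙ υ)
    rwa [disjoint_iff.mp hdisj, finrank_bot, add_zero, finrank_span_singleton hυ_ne] at this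
  rw [← hrank]
  refine finrank_le_card_of_nonneg hsymm b horth hneg fun w hw => ?_
  obtain ⟨y, hy, _, hz, rfl⟩ := mem_sup.mp hw
  obtain ⟨t, rfl⟩ := mem_span_singleton.mp hz
  have hyυ : form y υ = 0 := hxυ hy
  simpa [hyυ, hsymm υ y, hυ] using hx_nonneg y hy

end Signature

section Plane

variable {K W : Type*} [Field K] [AddCommGroup W] [Module K W] {form : W →ₗ[K] W →ₗ[K] K} {υ : W}

theorem span_pair_eq_of_finrank_eq_two {U : Submodule K W} [FiniteDimensional K U]
    (hU : finrank K U = 2) {e₁ e₂ : W} (he₁ : e₁ ∈ U) (he₂ : e₂ ∈ U)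
    (hli : LinearIndependent K ![e₁, e₂]) :
    U = span K {e₁, e₂} := by
  refine (eq_of_le_of_finrank_eq (span_le.mpr ?_) ?_).symm
  · rintro _ (rfl | rfl) <;> assumption
  · rw [hU, ← Matrix.range_cons_cons_empty, finrank_span_eq_card hli, Fintype.card_fin]

theorem exists_orthogonal_pair_of_not_le_ker {U : Submodule K W} [FiniteDimensional K U]
    (hU : finrank K U = 2) (hanis : ∀ w ∈ U, w ≠ 0 → form w w ≠ 0)
    (hυ : ¬U ≤ LinearMap.ker (form.flip υ)) :
    ∃ e₁ e₂ : W, U = span K {e₁, e₂} ∧ e₁ ≠ 0 ∧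
      form e₁ υ = 0 ∧ form e₂ υ = 1 ∧ form e₁ e₂ = 0 := by
  obtain ⟨e, heU, he⟩ := SetLike.not_le_iff_exists.mp hυ
  replace he : form e υ ≠ 0 := he
  have hker : LinearMap.ker ((form.flip υ).domRestrict U) ≠ ⊥ :=
    LinearMap.ker_ne_bot_of_finrank_lt (by rw [hU, finrank_self]; norm_num)
  obtain ⟨⟨e₁, he₁U⟩, he₁υ, he₁⟩ := (Submodule.ne_bot_iff _).mp hker
  replace he₁ : e₁ ≠ 0 := fun h => he₁ (by simp [h])
  replace he₁υ : form e₁ υ = 0 := he₁υ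
  set e' := (form e υ)⁻¹ • e
  set e₂ := e' - (form e₁ e' / form e₁ e₁) • e₁
  have he₂υ : form e₂ υ = 1 := by
    simp [e₂, e', he₁υ, he]
  have he₁₂ : form e₁ e₂ = 0 := by
    have := hanis e₁ he₁U he₁
    simp only [e₂, map_sub, map_smul, smul_eq_mul]
    field_simp
    ring
  refine ⟨e₁, e₂, span_pair_eq_of_finrank_eq_two hU he₁U ?_ ?_, he₁, he₁υ, he₂υ, he₁₂⟩
  · exact U.sub_mem (U.smul_mem _ heU) (U.smul_mem _ he₁U)
  · refine LinearIndependent.pair_iff.mpr fun s t hst => ?_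
    have ht : t = 0 := by simpa [he₁υ, he₂υ] using congr_arg (form.flip υ) hst
    subst ht
    simpa [he₁] using hst

theorem eq_and_eq_smul_of_mem_span_pair {f₁ f₂ g₁ g₂ : W}
    (hf₁υ : form f₁ υ = 0) (hf₂υ : form f₂ υ = 1) (hf₁₂ : form f₁ f₂ = 0)
    (hf₁₁ : form f₁ f₁ ≠ 0) (hg₁ : g₁ ∈ span K {f₁, f₂}) (hg₂ : g₂ ∈ span K {f₁, f₂})
    (hg₁υ : form g₁ υ = 0) (hg₂υ : form g₂ υ = 1) (hg₁₂ : form g₁ g₂ = 0) (hg₁_ne : g₁ ≠ 0) :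
    g₂ = f₂ ∧ ∃ s : K, s ≠ 0 ∧ g₁ = s • f₁ := by
  obtain ⟨a, b, rfl⟩ := mem_span_pair.mp hg₁
  obtain ⟨c, d, rfl⟩ := mem_span_pair.mp hg₂
  obtain rfl : b = 0 := by simpa [hf₁υ, hf₂υ] using hg₁υ
  obtain rfl : d = 1 := by simpa [hf₁υ, hf₂υ] using hg₂υ
  have ha : a ≠ 0 := by rintro rfl; simp at hg₁_ne
  obtain rfl : c = 0 := by simpa [hf₁₂, ha, hf₁₁] using hg₁₂
  exact ⟨by simp, a, ha, by simp⟩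

end Plane

section NullPair

variable {K W : Type*} [Field K] [AddCommGroup W] [Module K W]
  {form : W →ₗ[K] W →ₗ[K] K} {υ0 υ : W}

variable (form υ0 υ) in
/-- For a hyperbolic pair `υ0, υ`, the projection onto `υ^⊥ ∩ υ0^⊥` along `span {υ0, υ}`. -/
def nullPairProj : W →ₗ[K] W :=
  LinearMap.id - (form.flip υ).smulRight υ0 - (form.flip υ0).smulRight υ

variable (form υ) in
def planeVec₁ (ω B : W) : W := ω - form B ω • υ

variable (form υ0 υ) in
def planeVec₂ (B : W) (V : K) : W := υ0 + B + (V - 1 / 2 * form B B) • υ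

@[simp]
theorem nullPairProj_apply (w : W) :
    nullPairProj form υ0 υ w = w - form w υ • υ0 - form w υ0 • υ := rfl

theorem form_nullPairProj_υ (hυ : form υ υ = 0) (hpair : form υ0 υ = 1) (w : W) :
    form (nullPairProj form υ0 υ w) υ = 0 := by
  simp [hυ, hpair]

theorem form_nullPairProj_υ0 (hsymm : ∀ x y, form x y = form y x) (hυ0 : form υ0 υ0 = 0)
    (hpair : form υ0 υ = 1) (w : W) :
    form (nullPairProj form υ0 υ w) υ0 = 0 := by
  simp [hυ0, hsymm υ υ0, hpair]

theorem nullPairProj_add_smul_eq {w : W} (hwυ : form w υ = 0) :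
    nullPairProj form υ0 υ w + form w υ0 • υ = w := by
  simp [hwυ]

theorem add_nullPairProj_add_smul_eq {w : W} (hwυ : form w υ = 1) :
    υ0 + nullPairProj form υ0 υ w + form w υ0 • υ = w := by
  simp only [nullPairProj_apply, hwυ, one_smul]
  abel

theorem nullPairProj_planeVec₁ (hsymm : ∀ x y, form x y = form y x) (hυ : form υ υ = 0)
    (hpair : form υ0 υ = 1) {ω : W} (hωυ : form ω υ = 0) (hωυ0 : form ω υ0 = 0) (B : W) :
    nullPairProj form υ0 υ (planeVec₁ form υ ω B) = ω := by
  simp [planeVec₁, hωυ, hωυ0, hυ, hsymm υ υ0, hpair]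

theorem nullPairProj_planeVec₂ (hsymm : ∀ x y, form x y = form y x) (hυ0 : form υ0 υ0 = 0)
    (hυ : form υ υ = 0) (hpair : form υ0 υ = 1) {B : W} (hBυ : form B υ = 0)
    (hBυ0 : form B υ0 = 0) (V : K) :
    nullPairProj form υ0 υ (planeVec₂ form υ0 υ B V) = B := by
  simp only [planeVec₂, nullPairProj_apply, map_add, map_smul, hpair, hBυ, hυ, hυ0, hBυ0,
    hsymm υ υ0]
  module

theorem form_planeVec₁_υ (hυ : form υ υ = 0) {ω : W} (hωυ : form ω υ = 0) (B : W) :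
    form (planeVec₁ form υ ω B) υ = 0 := by
  simp [planeVec₁, hωυ, hυ]

theorem form_planeVec₂_υ (hυ : form υ υ = 0) (hpair : form υ0 υ = 1) {B : W}
    (hBυ : form B υ = 0) (V : K) :
    form (planeVec₂ form υ0 υ B V) υ = 1 := by
  simp [planeVec₂, hBυ, hυ, hpair]

theorem form_planeVec₁_self (hsymm : ∀ x y, form x y = form y x) (hυ : form υ υ = 0) {ω : W}
    (hωυ : form ω υ = 0) (B : W) :
    form (planeVec₁ form υ ω B) (planeVec₁ form υ ω B) = form ω ω := by
  simp [planeVec₁, hωυ, hsymm υ ω, hυ]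

theorem form_planeVec₂_self [NeZero (2 : K)] (hsymm : ∀ x y, form x y = form y x)
    (hυ0 : form υ0 υ0 = 0) (hυ : form υ υ = 0) (hpair : form υ0 υ = 1) {B : W}
    (hBυ : form B υ = 0) (hBυ0 : form B υ0 = 0) (V : K) :
    form (planeVec₂ form υ0 υ B V) (planeVec₂ form υ0 υ B V) = 2 * V := by
  simp only [planeVec₂, map_add, map_smul, LinearMap.add_apply, LinearMap.smul_apply,
    smul_eq_mul, hυ0, hυ, hpair, hBυ, hBυ0, hsymm υ0 B, hsymm υ B, hsymm υ υ0]
  field_simp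
  ring

theorem form_planeVec₁_planeVec₂ (hsymm : ∀ x y, form x y = form y x) (hυ : form υ υ = 0)
    (hpair : form υ0 υ = 1) {ω B : W} (hωυ : form ω υ = 0) (hωυ0 : form ω υ0 = 0)
    (hBυ : form B υ = 0) (V : K) :
    form (planeVec₁ form υ ω B) (planeVec₂ form υ0 υ B V) = 0 := by
  simp [planeVec₁, planeVec₂, hωυ, hωυ0, hsymm υ B, hBυ, hsymm υ υ0, hpair, hυ, hsymm ω B]

end NullPair

section PlaneCoords

variable {K W : Type*} [Field K] [LinearOrder K] [IsStrictOrderedRing K]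
  [AddCommGroup W] [Module K W] {form : W →ₗ[K] W →ₗ[K] K} {υ0 υ : W}

variable (form υ0 υ) in
structure IsPlaneCoords (U : Submodule K W) (ω B : W) (V : K) : Prop where
  form_ω_υ : form ω υ = 0
  form_ω_υ0 : form ω υ0 = 0
  form_B_υ : form B υ = 0
  form_B_υ0 : form B υ0 = 0
  V_pos : 0 < V
  form_ω_pos : 0 < form ω ω
  span_eq : U = span K {planeVec₁ form υ ω B, planeVec₂ form υ0 υ B V}

theorem exists_isPlaneCoords (hsymm : ∀ x y, form x y = form y x) (hυ0 : form υ0 υ0 = 0)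
    (hυ : form υ υ = 0) (hpair : form υ0 υ = 1) {U : Submodule K W} [FiniteDimensional K U]
    (hU : finrank K U = 2) (hpos : ∀ w ∈ U, w ≠ 0 → 0 < form w w)
    (hUυ : ¬U ≤ LinearMap.ker (form.flip υ)) :
    ∃ ω B V, IsPlaneCoords form υ0 υ U ω B V := by
  obtain ⟨e₁, e₂, hU_eq, he₁_ne, he₁υ, he₂υ, he₁₂⟩ :=
    exists_orthogonal_pair_of_not_le_ker hU (fun w hw hw0 => (hpos w hw hw0).ne') hUυ
  set ω := nullPairProj form υ0 υ e₁
  set B := nullPairProj form υ0 υ e₂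
  set V := form e₂ υ0 + 1 / 2 * form B B
  have hωυ := form_nullPairProj_υ hυ hpair e₁
  have hωυ0 := form_nullPairProj_υ0 hsymm hυ0 hpair e₁
  have hBυ := form_nullPairProj_υ hυ hpair e₂
  have hBυ0 := form_nullPairProj_υ0 hsymm hυ0 hpair e₂
  have he₂_eq : planeVec₂ form υ0 υ B V = e₂ := by
    rw [planeVec₂, show V - 1 / 2 * form B B = form e₂ υ0 by ring]
    exact add_nullPairProj_add_smul_eq he₂υ
  have he₁_eq : planeVec₁ form υ ω B = e₁ := by
    have hdecomp : e₁ = planeVec₁ form υ ω B + (form e₁ υ0 + form B ω) • υ := by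
      rw [planeVec₁]
      conv_lhs => rw [← nullPairProj_add_smul_eq (υ0 := υ0) he₁υ]
      module
    have hcoef : form e₁ υ0 + form B ω = 0 := by
      rw [← he₁₂, ← he₂_eq]
      conv_rhs => rw [hdecomp]
      rw [map_add, map_smul, LinearMap.add_apply, LinearMap.smul_apply,
        form_planeVec₁_planeVec₂ hsymm hυ hpair hωυ hωυ0 hBυ, hsymm υ,
        form_planeVec₂_υ hυ hpair hBυ, smul_eq_mul, mul_one, zero_add]
    rw [hcoef, zero_smul, add_zero] at hdecomp
    exact hdecomp.symm
  have he₁U : e₁ ∈ U := hU_eq ▸ subset_span (by simp)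
  have he₂U : e₂ ∈ U := hU_eq ▸ subset_span (by simp)
  have he₂_ne : e₂ ≠ 0 := by rintro rfl; simp at he₂υ
  refine ⟨ω, B, V, hωυ, hωυ0, hBυ, hBυ0, ?_, ?_, by rw [he₁_eq, he₂_eq, hU_eq]⟩
  · have := hpos e₂ he₂U he₂_ne
    rw [← he₂_eq, form_planeVec₂_self hsymm hυ0 hυ hpair hBυ hBυ0] at this
    linarith
  · rw [← form_planeVec₁_self hsymm hυ hωυ B, he₁_eq]
    exact hpos e₁ he₁U he₁_ne

theorem IsPlaneCoords.unique (hsymm : ∀ x y, form x y = form y x) (hυ0 : form υ0 υ0 = 0)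
    (hυ : form υ υ = 0) (hpair : form υ0 υ = 1) {U : Submodule K W} {ω B ω' B' : W} {V V' : K}
    (h : IsPlaneCoords form υ0 υ U ω B V) (h' : IsPlaneCoords form υ0 υ U ω' B' V') :
    B' = B ∧ V' = V ∧ ∃ c : K, c ≠ 0 ∧ ω' = c • ω := by
  have hmem : ∀ w ∈ ({planeVec₁ form υ ω' B', planeVec₂ form υ0 υ B' V'} : Set W),
      w ∈ span K {planeVec₁ form υ ω B, planeVec₂ form υ0 υ B V} := fun w hw => by
    rw [← h.span_eq, h'.span_eq]
    exact subset_span hw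
  obtain ⟨h₂, c, hc, h₁⟩ := eq_and_eq_smul_of_mem_span_pair
    (form_planeVec₁_υ hυ h.form_ω_υ B) (form_planeVec₂_υ hυ hpair h.form_B_υ V)
    (form_planeVec₁_planeVec₂ hsymm hυ hpair h.form_ω_υ h.form_ω_υ0 h.form_B_υ V)
    (by rw [form_planeVec₁_self hsymm hυ h.form_ω_υ]; exact h.form_ω_pos.ne')
    (hmem _ (by simp)) (hmem _ (by simp))
    (form_planeVec₁_υ hυ h'.form_ω_υ B') (form_planeVec₂_υ hυ hpair h'.form_B_υ V')
    (form_planeVec₁_planeVec₂ hsymm hυ hpair h'.form_ω_υ h'.form_ω_υ0 h'.form_B_υ V')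
    (fun h0 => by
      have := form_planeVec₁_self hsymm hυ h'.form_ω_υ B'
      rw [h0, map_zero] at this
      exact h'.form_ω_pos.ne' this.symm)
  refine ⟨?_, ?_, c, hc, ?_⟩
  · rw [← nullPairProj_planeVec₂ hsymm hυ0 hυ hpair h'.form_B_υ h'.form_B_υ0 V', h₂,
      nullPairProj_planeVec₂ hsymm hυ0 hυ hpair h.form_B_υ h.form_B_υ0 V]
  · have := congr_arg (fun w => form w w) h₂
    simp only [form_planeVec₂_self hsymm hυ0 hυ hpair h.form_B_υ h.form_B_υ0,
      form_planeVec₂_self hsymm hυ0 hυ hpair h'.form_B_υ h'.form_B_υ0] at this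
    linarith
  · have := congr_arg (nullPairProj form υ0 υ) h₁
    rwa [map_smul, nullPairProj_planeVec₁ hsymm hυ hpair h'.form_ω_υ h'.form_ω_υ0,
      nullPairProj_planeVec₁ hsymm hυ hpair h.form_ω_υ h.form_ω_υ0] at this

end PlaneCoords

theorem stmt1_general
    {W : Type*} [AddCommGroup W] [Module ℝ W] [FiniteDimensional ℝ W]
    (m : ℕ)
    (form : W →ₗ[ℝ] W →ₗ[ℝ] ℝ)
    (hsymm : ∀ x y : W, form x y = form y x)
    (hsig : ∃ b : Module.Basis (Fin 4 ⊕ Fin m) ℝ W,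
      (∀ i j, i ≠ j → form (b i) (b j) = 0) ∧
      (∀ i : Fin 4, 0 < form (b (Sum.inl i)) (b (Sum.inl i))) ∧
      (∀ j : Fin m, form (b (Sum.inr j)) (b (Sum.inr j)) < 0))
    (υ0 υ : W)
    (hυ0 : form υ0 υ0 = 0) (hυ : form υ υ = 0) (hpair : form υ0 υ = 1)
    (x Ω ℧ : Submodule ℝ W)
    (hxpos : ∀ w ∈ x, w ≠ 0 → 0 < form w w)
    (hxdim : Module.finrank ℝ ↥x = 4)
    (h℧dim : Module.finrank ℝ ↥℧ = 2)
    (h℧x : ℧ ≤ x)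
    (hdecomp : Ω ⊔ ℧ = x)
    (hΩυ : ∀ z ∈ Ω, form z υ = 0) :
    ∃ ω B : W, ∃ V : ℝ,
      form ω υ = 0 ∧ form ω υ0 = 0 ∧ form B υ = 0 ∧ form B υ0 = 0 ∧
      0 < V ∧ 0 < form ω ω ∧
      ℧ = Submodule.span ℝ
        ({ω - (form B ω) • υ, υ0 + B + (V - (1/2 : ℝ) * form B B) • υ} : Set W) ∧
      (∀ ω' B' : W, ∀ V' : ℝ,
        form ω' υ = 0 → form ω' υ0 = 0 → form B' υ = 0 → form B' υ0 = 0 →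
        0 < V' → 0 < form ω' ω' →
        ℧ = Submodule.span ℝ
          ({ω' - (form B' ω') • υ, υ0 + B' + (V' - (1/2 : ℝ) * form B' B') • υ} : Set W) →
        B' = B ∧ V' = V ∧ ∃ c : ℝ, c ≠ 0 ∧ ω' = c • ω) := by
  obtain ⟨b, hb_orth, -, hb_neg⟩ := hsig
  have hυ_ne : υ ≠ 0 := by rintro rfl; simp at hpair
  have h℧υ : ¬℧ ≤ LinearMap.ker (form.flip υ) := fun h℧υ => by
    have := finrank_add_one_le_card_of_le_ker hsymm b hb_orth hb_neg hxpos hυ hυ_ne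
      (hdecomp ▸ sup_le (fun z hz => hΩυ z hz) h℧υ)
    simp [hxdim] at this
  obtain ⟨ω, B, V, h⟩ :=
    exists_isPlaneCoords hsymm hυ0 hυ hpair h℧dim (fun w hw => hxpos w (h℧x hw)) h℧υ
  exact ⟨ω, B, V, h.form_ω_υ, h.form_ω_υ0, h.form_B_υ, h.form_B_υ0, h.V_pos, h.form_ω_pos,
    h.span_eq, fun ω' B' V' h₁ h₂ h₃ h₄ h₅ h₆ h₇ =>
      h.unique hsymm hυ0 hυ hpair ⟨h₁, h₂, h₃, h₄, h₅, h₆, h₇⟩⟩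

/-- Let `W` be a finite-dimensional real vector space with a nondegenerate
symmetric bilinear form of signature `(4,m)`, `m ≥ 1` (witnessed by an orthogonal basis with
4 vectors of positive square and `m` of negative square).  Let `υ⁰, υ ∈ W` be isotropic with
`⟨υ⁰,υ⟩ = 1`, and let `x = Ω ⊥ ℧` be a positive definite 4-dimensional subspace decomposed
orthogonally into 2-dimensional subspaces with `Ω ⊥ υ⁰, υ`.  Then there are
`ω, B ∈ υ^⊥ ∩ (υ⁰)^⊥` and `V > 0` with `⟨ω,ω⟩ > 0` such that
`℧ = span{ω − ⟨B,ω⟩υ, υ⁰ + B + (V − ½⟨B,B⟩)υ}`; moreover `B` and `V` are uniquely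
determined and `ω` is unique up to a nonzero real scalar. -/
theorem stmt1
    {W : Type*} [AddCommGroup W] [Module ℝ W] [FiniteDimensional ℝ W]
    (m : ℕ) (hm : 1 ≤ m)
    (form : W →ₗ[ℝ] W →ₗ[ℝ] ℝ)
    (hsymm : ∀ x y : W, form x y = form y x)
    (hsig : ∃ b : Module.Basis (Fin 4 ⊕ Fin m) ℝ W,
      (∀ i j, i ≠ j → form (b i) (b j) = 0) ∧
      (∀ i : Fin 4, 0 < form (b (Sum.inl i)) (b (Sum.inl i))) ∧
      (∀ j : Fin m, form (b (Sum.inr j)) (b (Sum.inr j)) < 0))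
    (υ0 υ : W)
    (hυ0 : form υ0 υ0 = 0) (hυ : form υ υ = 0) (hpair : form υ0 υ = 1)
    (x Ω ℧ : Submodule ℝ W)
    (hxpos : ∀ w ∈ x, w ≠ 0 → 0 < form w w)
    (hxdim : Module.finrank ℝ ↥x = 4)
    (hΩdim : Module.finrank ℝ ↥Ω = 2)
    (h℧dim : Module.finrank ℝ ↥℧ = 2)
    (hΩx : Ω ≤ x) (h℧x : ℧ ≤ x)
    (hdecomp : Ω ⊔ ℧ = x)
    (horth : ∀ z ∈ Ω, ∀ w ∈ ℧, form z w = 0)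
    (hΩυ : ∀ z ∈ Ω, form z υ = 0) (hΩυ0 : ∀ z ∈ Ω, form z υ0 = 0) :
    ∃ ω B : W, ∃ V : ℝ,
      form ω υ = 0 ∧ form ω υ0 = 0 ∧ form B υ = 0 ∧ form B υ0 = 0 ∧
      0 < V ∧ 0 < form ω ω ∧
      ℧ = Submodule.span ℝ
        ({ω - (form B ω) • υ, υ0 + B + (V - (1/2 : ℝ) * form B B) • υ} : Set W) ∧
      (∀ ω' B' : W, ∀ V' : ℝ,
        form ω' υ = 0 → form ω' υ0 = 0 → form B' υ = 0 → form B' υ0 = 0 →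
        0 < V' → 0 < form ω' ω' →
        ℧ = Submodule.span ℝ
          ({ω' - (form B' ω') • υ, υ0 + B' + (V' - (1/2 : ℝ) * form B' B') • υ} : Set W) →
        B' = B ∧ V' = V ∧ ∃ c : ℝ, c ≠ 0 ∧ ω' = c • ω) :=
  stmt1_general m form hsymm hsig υ0 υ hυ0 hυ hpair x Ω ℧ hxpos hxdim h℧dim h℧x hdecomp hΩυ
end

section
/- P(V) is an open subset of V ⊗ ℂ with exactly two connected components, and complex conjugation x + iy ↦ x − iy maps each component homeomorphically onto the other. -/
/-!
Split `V = V₊ ⊕ V₋` orthogonally, with `V₊` a positive plane identified with `ℂ` and `V₋`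
negative semidefinite. If `x, y` span a positive plane, no nontrivial combination of them lies
in `V₋`, so their projections `u, v ∈ ℂ` are `ℝ`-independent and the sign of `Im (conj u * v)`
cuts `P(V)` into two open pieces exchanged by `y ↦ -y`. Each piece is path connected: scaling
the `V₋`-components of `x` and `y` by `t ∈ [0, 1]` only increases the form on every combination,
which retracts the piece onto pairs in `V₊`, and those are the image of `(ℂ ∖ 0) × ℍ` under
`(z, w) ↦ (z, z w)`.
-/

open ComplexConjugate

theorem pos_and_pos_det_iff {A D C : ℝ} :
    (0 < A ∧ 0 < A * C - D ^ 2) ↔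
      ∀ a b : ℝ, (a, b) ≠ 0 → 0 < a ^ 2 * A + 2 * a * b * D + b ^ 2 * C := by
  constructor
  · rintro ⟨hA, hdet⟩ a b hab
    have hsq : A * (a ^ 2 * A + 2 * a * b * D + b ^ 2 * C)
        = (a * A + b * D) ^ 2 + b ^ 2 * (A * C - D ^ 2) := by ring
    refine pos_of_mul_pos_right (hsq ▸ ?_) hA.le
    rcases eq_or_ne b 0 with rfl | hb
    · have ha : a ≠ 0 := by simpa using hab
      simpa using sq_pos_of_ne_zero (mul_ne_zero ha hA.ne')
    · positivity
  · intro h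
    have hA : 0 < A := by simpa using h 1 0 (by simp)
    refine ⟨hA, pos_of_mul_pos_right ?_ hA.le⟩
    linear_combination h (-D) A (by simp [hA.ne'])

section PositivePairs

variable {V : Type*} [AddCommGroup V] [Module ℝ V] (B : V →ₗ[ℝ] V →ₗ[ℝ] ℝ)

-- `P(V)`: pairs spanning a plane on which `B` is positive definite.
def positivePairs : Set (V × V) :=
  {p | ∀ a b : ℝ, (a, b) ≠ 0 → 0 < B (a • p.1 + b • p.2) (a • p.1 + b • p.2)}

variable {B}

theorem mem_positivePairs_iff (hB : ∀ x y, B x y = B y x) {p : V × V} :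
    p ∈ positivePairs B ↔
      0 < B p.1 p.1 ∧ 0 < B p.1 p.1 * B p.2 p.2 - B p.1 p.2 ^ 2 := by
  have hexp : ∀ a b : ℝ, B (a • p.1 + b • p.2) (a • p.1 + b • p.2)
      = a ^ 2 * B p.1 p.1 + 2 * a * b * B p.1 p.2 + b ^ 2 * B p.2 p.2 := by
    intro a b
    simp only [map_add, map_smul, LinearMap.add_apply, LinearMap.smul_apply, smul_eq_mul,
      hB p.2 p.1]
    ring
  change (∀ a b : ℝ, (a, b) ≠ 0 → _) ↔ _
  simp only [hexp, pos_and_pos_det_iff]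

end PositivePairs

theorem Complex.im_conj_mul_ne_zero_iff {u v : ℂ} :
    (conj u * v).im ≠ 0 ↔ ∀ a b : ℝ, (a, b) ≠ 0 → a • u + b • v ≠ 0 := by
  constructor
  · intro hne a b hab h
    have hd : (conj u * v).im = u.re * v.im - u.im * v.re := by
      simp only [Complex.mul_im, Complex.conj_re, Complex.conj_im]
      ring
    have hre : a * u.re + b * v.re = 0 := by simpa using congrArg Complex.re h
    have him : a * u.im + b * v.im = 0 := by simpa using congrArg Complex.im h
    have ha : a * (conj u * v).im = 0 := by linear_combination v.im * hre - v.re * him + a * hd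
    have hb : b * (conj u * v).im = 0 := by linear_combination u.re * him - u.im * hre + b * hd
    exact hab (Prod.ext ((mul_eq_zero.1 ha).resolve_right hne)
      ((mul_eq_zero.1 hb).resolve_right hne))
  · intro h hzero
    rcases eq_or_ne u 0 with rfl | hu
    · exact h 1 0 (by simp) (by simp)
    -- `conj u * v` is real, so `(conj u * v) u = |u|² v`
    have hreal : ((conj u * v).re : ℂ) = conj u * v := Complex.ext (by simp) (by simp [hzero])
    refine h (conj u * v).re (-Complex.normSq u) (by simp [hu]) ?_
    rw [Complex.real_smul, Complex.real_smul, hreal, Complex.ofReal_neg,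
      Complex.normSq_eq_conj_mul_self]
    ring

theorem Complex.isPathConnected_setOf_im_conj_mul_pos :
    IsPathConnected {p : ℂ × ℂ | 0 < (conj p.1 * p.2).im} := by
  have hset : {p : ℂ × ℂ | 0 < (conj p.1 * p.2).im} =
      (fun q : ℂ × ℂ => (q.1, q.1 * q.2)) '' ({0}ᶜ ×ˢ {w | 0 < w.im}) := by
    ext p
    constructor
    · intro (h : 0 < (conj p.1 * p.2).im)
      have hu : p.1 ≠ 0 := by intro hu; simp [hu] at h
      refine ⟨(p.1, p.2 / p.1), ⟨hu, ?_⟩, by simp [mul_div_cancel₀ _ hu]⟩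
      show 0 < (p.2 / p.1).im
      rw [Complex.div_im, ← sub_div]
      refine div_pos ?_ (Complex.normSq_pos.2 hu)
      simp only [Complex.mul_im, Complex.conj_re, Complex.conj_im] at h
      linarith
    · rintro ⟨⟨z, w⟩, ⟨hz, hw : 0 < w.im⟩, rfl⟩
      show 0 < (conj z * (z * w)).im
      rw [← mul_assoc, ← Complex.normSq_eq_conj_mul_self, Complex.im_ofReal_mul]
      exact mul_pos (Complex.normSq_pos.2 hz) hw
  rw [hset]
  have hrank : 1 < Module.rank ℝ ℂ := by rw [Complex.rank_real_complex]; norm_num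
  exact ((isPathConnected_compl_singleton_of_one_lt_rank hrank 0).prod
    ((convex_halfSpace_im_gt 0).isPathConnected ⟨Complex.I, by simp⟩)).image (by fun_prop)

-- The `B`-orthogonal decomposition `V = V₊ ⊕ V₋` of a form of signature `(2, n)`, with
-- `V₊ = incl ℂ` and `V₋ = ker coord`.
structure PositivePlaneSplitting {V : Type*} [AddCommGroup V] [Module ℝ V]
    (B : V →ₗ[ℝ] V →ₗ[ℝ] ℝ) where
  coord : V →ₗ[ℝ] ℂ
  incl : ℂ →ₗ[ℝ] V
  coord_incl (z : ℂ) : coord (incl z) = z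
  apply_incl_eq_zero (z : ℂ) {w : V} : coord w = 0 → B (incl z) w = 0
  apply_incl_self_pos {z : ℂ} : z ≠ 0 → 0 < B (incl z) (incl z)
  apply_self_nonpos {w : V} : coord w = 0 → B w w ≤ 0

namespace PositivePlaneSplitting

variable {V : Type*} [AddCommGroup V] [Module ℝ V] {B : V →ₗ[ℝ] V →ₗ[ℝ] ℝ}
  (s : PositivePlaneSplitting B)

noncomputable def shrink (t : ℝ) : V →ₗ[ℝ] V :=
  s.incl ∘ₗ s.coord + t • (LinearMap.id - s.incl ∘ₗ s.coord)

theorem shrink_apply (t : ℝ) (v : V) :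
    s.shrink t v = s.incl (s.coord v) + t • (v - s.incl (s.coord v)) := rfl

theorem coord_sub_incl_coord (v : V) : s.coord (v - s.incl (s.coord v)) = 0 := by
  rw [map_sub, s.coord_incl, sub_self]

theorem coord_shrink (t : ℝ) (v : V) : s.coord (s.shrink t v) = s.coord v := by
  rw [shrink_apply, map_add, map_smul, s.coord_sub_incl_coord, smul_zero, add_zero, s.coord_incl]

theorem apply_shrink_self (hB : ∀ x y, B x y = B y x) (t : ℝ) (v : V) :
    B (s.shrink t v) (s.shrink t v) = B (s.incl (s.coord v)) (s.incl (s.coord v)) +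
      t ^ 2 * B (v - s.incl (s.coord v)) (v - s.incl (s.coord v)) := by
  have h := s.apply_incl_eq_zero (s.coord v) (s.coord_sub_incl_coord v)
  rw [hB] at h
  simp only [shrink_apply, map_add, map_smul, LinearMap.add_apply, LinearMap.smul_apply,
    smul_eq_mul, s.apply_incl_eq_zero _ (s.coord_sub_incl_coord v), h]
  ring

theorem apply_self_le_apply_shrink (hB : ∀ x y, B x y = B y x) {t : ℝ} (ht : t ^ 2 ≤ 1)
    (v : V) : B v v ≤ B (s.shrink t v) (s.shrink t v) := by
  have hv := s.apply_shrink_self hB 1 v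
  rw [show s.shrink 1 v = v by simp [shrink_apply]] at hv
  have hneg := s.apply_self_nonpos (s.coord_sub_incl_coord v)
  rw [s.apply_shrink_self hB, hv]
  nlinarith

theorem shrink_mem_positivePairs (hB : ∀ x y, B x y = B y x) {t : ℝ} (ht : t ^ 2 ≤ 1)
    {p : V × V} (hp : p ∈ positivePairs B) :
    (s.shrink t p.1, s.shrink t p.2) ∈ positivePairs B := by
  intro a b hab
  simpa only [map_add, map_smul] using
    (hp a b hab).trans_le (s.apply_self_le_apply_shrink hB ht _)

theorem incl_mem_positivePairs {u v : ℂ} (h : (conj u * v).im ≠ 0) :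
    (s.incl u, s.incl v) ∈ positivePairs B := by
  intro a b hab
  simpa only [map_add, map_smul] using
    s.apply_incl_self_pos (Complex.im_conj_mul_ne_zero_iff.1 h a b hab)

noncomputable def coordDet (p : V × V) : ℝ := (conj (s.coord p.1) * s.coord p.2).im

def orientedPairs : Set (V × V) := {p | p ∈ positivePairs B ∧ 0 < s.coordDet p}

theorem coordDet_ne_zero {p : V × V} (hp : p ∈ positivePairs B) : s.coordDet p ≠ 0 := by
  refine Complex.im_conj_mul_ne_zero_iff.2 fun a b hab h => ?_
  have hle := s.apply_self_nonpos (w := a • p.1 + b • p.2) (by simpa using h)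
  exact (hp a b hab).not_ge hle

theorem incl_mem_orientedPairs {u v : ℂ} (h : 0 < (conj u * v).im) :
    (s.incl u, s.incl v) ∈ s.orientedPairs := by
  refine ⟨s.incl_mem_positivePairs h.ne', ?_⟩
  simpa only [coordDet, s.coord_incl] using h

theorem image_neg_snd_orientedPairs (hB : ∀ x y, B x y = B y x) :
    (fun p : V × V => (p.1, -p.2)) '' s.orientedPairs =
      {p | p ∈ positivePairs B ∧ s.coordDet p < 0} := by
  rw [Function.Involutive.image_eq_preimage_symm fun p => by simp]
  ext p
  simp [orientedPairs, coordDet, mem_positivePairs_iff hB]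

theorem orientedPairs_inter_image_neg_snd (hB : ∀ x y, B x y = B y x) :
    s.orientedPairs ∩ (fun p : V × V => (p.1, -p.2)) '' s.orientedPairs = ∅ := by
  rw [s.image_neg_snd_orientedPairs hB, Set.eq_empty_iff_forall_notMem]
  exact fun p hp => hp.1.2.not_gt hp.2.2

theorem orientedPairs_union_image_neg_snd (hB : ∀ x y, B x y = B y x) :
    s.orientedPairs ∪ (fun p : V × V => (p.1, -p.2)) '' s.orientedPairs = positivePairs B := by
  rw [s.image_neg_snd_orientedPairs hB]
  ext p
  refine ⟨fun hp => hp.elim And.left And.left, fun hp => ?_⟩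
  rcases (s.coordDet_ne_zero hp).lt_or_gt with h | h
  exacts [Or.inr ⟨hp, h⟩, Or.inl ⟨hp, h⟩]

end PositivePlaneSplitting

section Basis

theorem apply_basis_left_eq_repr_mul {R M ι : Type*} [CommSemiring R] [AddCommMonoid M]
    [Module R M] {B : M →ₗ[R] M →ₗ[R] R} (b : Module.Basis ι R M)
    (horth : ∀ i j, i ≠ j → B (b i) (b j) = 0) (i : ι) (w : M) :
    B (b i) w = b.repr w i * B (b i) (b i) := by
  have h : B (b i) = B (b i) (b i) • b.coord i := b.ext fun j => by
    rcases eq_or_ne i j with rfl | hij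
    · simp
    · simp [horth i j hij, hij.symm]
  rw [h]
  simp [mul_comm]

theorem apply_self_eq_sum_repr_sq {R M ι : Type*} [CommSemiring R] [AddCommMonoid M]
    [Module R M] {B : M →ₗ[R] M →ₗ[R] R} [Fintype ι] (b : Module.Basis ι R M)
    (horth : ∀ i j, i ≠ j → B (b i) (b j) = 0) (w : M) :
    B w w = ∑ i, b.repr w i ^ 2 * B (b i) (b i) := by
  nth_rewrite 1 [← b.sum_repr w]
  rw [map_sum, LinearMap.sum_apply]
  refine Finset.sum_congr rfl fun i _ => ?_
  rw [map_smul, LinearMap.smul_apply, smul_eq_mul, apply_basis_left_eq_repr_mul b horth]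
  ring

variable {V : Type*} [AddCommGroup V] [Module ℝ V] {B : V →ₗ[ℝ] V →ₗ[ℝ] ℝ}

noncomputable def PositivePlaneSplitting.ofBasis {κ : Type*} [Fintype κ]
    (b : Module.Basis (Fin 2 ⊕ κ) ℝ V) (horth : ∀ i j, i ≠ j → B (b i) (b j) = 0)
    (hpos : ∀ i, 0 < B (b (.inl i)) (b (.inl i))) (hneg : ∀ j, B (b (.inr j)) (b (.inr j)) ≤ 0) :
    PositivePlaneSplitting B where
  coord := (b.coord (.inl 0)).smulRight (1 : ℂ) + (b.coord (.inl 1)).smulRight Complex.I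
  incl := Complex.reLm.smulRight (b (.inl 0)) + Complex.imLm.smulRight (b (.inl 1))
  coord_incl z := by
    apply Complex.ext <;> simp
  apply_incl_eq_zero z w hw := by
    have h0 : b.repr w (.inl 0) = 0 := by simpa using congrArg Complex.re hw
    have h1 : b.repr w (.inl 1) = 0 := by simpa using congrArg Complex.im hw
    simp only [LinearMap.add_apply, LinearMap.smulRight_apply, map_add, map_smul,
      LinearMap.smul_apply, apply_basis_left_eq_repr_mul b horth _ w, h0, h1]
    simp
  apply_incl_self_pos {z} hz := by
    have h01 : B (b (.inl 0)) (b (.inl 1)) = 0 := horth _ _ (by simp)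
    have h10 : B (b (.inl 1)) (b (.inl 0)) = 0 := horth _ _ (by simp)
    simp only [LinearMap.add_apply, LinearMap.smulRight_apply, map_add, map_smul,
      LinearMap.smul_apply, smul_eq_mul, h01, h10, Complex.reLm_coe, Complex.imLm_coe]
    have h0 := hpos 0
    have h1 := hpos 1
    have hz' : z.re ≠ 0 ∨ z.im ≠ 0 := by
      by_contra! h
      exact hz (Complex.ext h.1 h.2)
    rcases hz' with hre | him
    · have := mul_pos (mul_self_pos.2 hre) h0
      nlinarith [mul_nonneg (mul_self_nonneg z.im) h1.le]
    · have := mul_pos (mul_self_pos.2 him) h1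
      nlinarith [mul_nonneg (mul_self_nonneg z.re) h0.le]
  apply_self_nonpos {w} hw := by
    have h0 : b.repr w (.inl 0) = 0 := by simpa using congrArg Complex.re hw
    have h1 : b.repr w (.inl 1) = 0 := by simpa using congrArg Complex.im hw
    rw [apply_self_eq_sum_repr_sq b horth, Fintype.sum_sum_type, Fin.sum_univ_two, h0, h1]
    simpa using Finset.sum_nonpos fun j _ => mul_nonpos_of_nonneg_of_nonpos (sq_nonneg _) (hneg j)

end Basis

section Topology

variable {V : Type*} [NormedAddCommGroup V] [NormedSpace ℝ V] {B : V →ₗ[ℝ] V →ₗ[ℝ] ℝ}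

namespace PositivePlaneSplitting

variable (s : PositivePlaneSplitting B)

theorem joinedIn_incl_coord (hB : ∀ x y, B x y = B y x) {p : V × V}
    (hp : p ∈ s.orientedPairs) :
    JoinedIn s.orientedPairs (s.incl (s.coord p.1), s.incl (s.coord p.2)) p := by
  refine JoinedIn.ofLine (f := fun t => (s.shrink t p.1, s.shrink t p.2)) ?_
    (by simp [shrink_apply]) (by simp [shrink_apply]) ?_
  · simp only [shrink_apply]
    fun_prop
  · rintro _ ⟨t, ht, rfl⟩
    have ht2 : t ^ 2 ≤ 1 := by nlinarith [ht.1, ht.2]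
    refine ⟨s.shrink_mem_positivePairs hB ht2 hp.1, ?_⟩
    simpa only [coordDet, s.coord_shrink] using hp.2

theorem isPathConnected_orientedPairs (hB : ∀ x y, B x y = B y x) :
    IsPathConnected s.orientedPairs := by
  have hsub : Prod.map s.incl s.incl '' {q : ℂ × ℂ | 0 < (conj q.1 * q.2).im} ⊆
      s.orientedPairs := by
    rintro _ ⟨q, hq, rfl⟩
    exact s.incl_mem_orientedPairs hq
  have hplane := Complex.isPathConnected_setOf_im_conj_mul_pos.image
    (s.incl.continuous_of_finiteDimensional.prodMap s.incl.continuous_of_finiteDimensional)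
  refine ⟨(s.incl 1, s.incl Complex.I), s.incl_mem_orientedPairs (by simp), fun p hp => ?_⟩
  exact ((hplane.joinedIn _ ⟨(1, Complex.I), by simp, rfl⟩ _
    ⟨(s.coord p.1, s.coord p.2), hp.2, rfl⟩).mono hsub).trans (s.joinedIn_incl_coord hB hp)

variable [FiniteDimensional ℝ V]

theorem _root_.isOpen_positivePairs (hB : ∀ x y, B x y = B y x) :
    IsOpen (positivePairs B) := by
  have hc : ∀ f g : V × V → V, Continuous f → Continuous g →
      Continuous fun p => B (f p) (g p) :=
    fun f g hf hg => B.toContinuousBilinearMap.continuous₂.comp (hf.prodMk hg)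
  have h11 := hc _ _ continuous_fst continuous_fst
  have h12 := hc _ _ continuous_fst continuous_snd
  have h22 := hc _ _ continuous_snd continuous_snd
  have hset : positivePairs B =
      {p | 0 < B p.1 p.1} ∩ {p | 0 < B p.1 p.1 * B p.2 p.2 - B p.1 p.2 ^ 2} :=
    Set.ext fun p => mem_positivePairs_iff hB
  rw [hset]
  exact (isOpen_lt continuous_const h11).inter
    (isOpen_lt continuous_const ((h11.mul h22).sub (h12.pow 2)))

theorem continuous_coordDet : Continuous s.coordDet := by
  have := s.coord.continuous_of_finiteDimensional
  unfold coordDet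
  fun_prop

theorem isOpen_orientedPairs (hB : ∀ x y, B x y = B y x) : IsOpen s.orientedPairs :=
  (isOpen_positivePairs hB).inter (isOpen_lt continuous_const s.continuous_coordDet)

end PositivePlaneSplitting

end Topology

theorem stmt9_general
    {V : Type*} [NormedAddCommGroup V] [NormedSpace ℝ V] [FiniteDimensional ℝ V]
    (n : ℕ)
    (form : V →ₗ[ℝ] V →ₗ[ℝ] ℝ)
    (hsymm : ∀ x y : V, form x y = form y x)
    (hsig : ∃ b : Module.Basis (Fin 2 ⊕ Fin n) ℝ V,
      (∀ i j, i ≠ j → form (b i) (b j) = 0) ∧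
      (∀ i : Fin 2, 0 < form (b (Sum.inl i)) (b (Sum.inl i))) ∧
      (∀ j : Fin n, form (b (Sum.inr j)) (b (Sum.inr j)) < 0))
    (P : Set (V × V))
    (hP : P = {p : V × V | 0 < form p.1 p.1 ∧
      0 < form p.1 p.1 * form p.2 p.2 - (form p.1 p.2) ^ 2}) :
    IsOpen P ∧
    ∃ U₁ U₂ : Set (V × V),
      IsOpen U₁ ∧ IsOpen U₂ ∧ IsConnected U₁ ∧ IsConnected U₂ ∧
      U₁ ∩ U₂ = ∅ ∧ U₁ ∪ U₂ = P ∧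
      (fun p : V × V => (p.1, -p.2)) '' U₁ = U₂ ∧
      (fun p : V × V => (p.1, -p.2)) '' U₂ = U₁ ∧
      ∃ h : ↥U₁ ≃ₜ ↥U₂, ∀ p : ↥U₁, (h p : V × V) = ((p : V × V).1, -(p : V × V).2) := by
  obtain ⟨b, horth, hpos, hneg⟩ := hsig
  let s := PositivePlaneSplitting.ofBasis b horth hpos fun j => (hneg j).le
  let σ : V × V ≃ₜ V × V := (Homeomorph.refl V).prodCongr (Homeomorph.neg V)
  have hP' : P = positivePairs form := hP ▸ Set.ext fun p => (mem_positivePairs_iff hsymm).symm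
  have hconn := (s.isPathConnected_orientedPairs hsymm).isConnected
  subst hP'
  refine ⟨isOpen_positivePairs hsymm, s.orientedPairs, σ '' s.orientedPairs,
    s.isOpen_orientedPairs hsymm, σ.isOpenMap _ (s.isOpen_orientedPairs hsymm), hconn,
    hconn.image _ σ.continuous.continuousOn, s.orientedPairs_inter_image_neg_snd hsymm,
    s.orientedPairs_union_image_neg_snd hsymm, rfl, by simp [Set.image_image, σ],
    σ.image _, fun p => rfl⟩

/-- Let `V` be a finite-dimensional real vector space with a nondegenerate
symmetric bilinear form of signature `(2,n)`, `n ≥ 1` (witnessed by an orthogonal basis with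
2 vectors of positive square and `n` of negative square).  Identify `V ⊗ ℂ` with `V × V`
(real and imaginary parts), and let
`P(V) = {x + iy : ⟨x,x⟩ > 0 and ⟨x,x⟩⟨y,y⟩ − ⟨x,y⟩² > 0}`.  Then `P(V)` is open, has
exactly two connected components, and complex conjugation `x + iy ↦ x − iy` maps each
component homeomorphically onto the other. -/
theorem stmt9
    {V : Type*} [NormedAddCommGroup V] [NormedSpace ℝ V] [FiniteDimensional ℝ V]
    (n : ℕ) (hn : 1 ≤ n)
    (form : V →ₗ[ℝ] V →ₗ[ℝ] ℝ)
    (hsymm : ∀ x y : V, form x y = form y x)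
    (hsig : ∃ b : Module.Basis (Fin 2 ⊕ Fin n) ℝ V,
      (∀ i j, i ≠ j → form (b i) (b j) = 0) ∧
      (∀ i : Fin 2, 0 < form (b (Sum.inl i)) (b (Sum.inl i))) ∧
      (∀ j : Fin n, form (b (Sum.inr j)) (b (Sum.inr j)) < 0))
    (P : Set (V × V))
    (hP : P = {p : V × V | 0 < form p.1 p.1 ∧
      0 < form p.1 p.1 * form p.2 p.2 - (form p.1 p.2) ^ 2}) :
    IsOpen P ∧
    ∃ U₁ U₂ : Set (V × V),
      IsOpen U₁ ∧ IsOpen U₂ ∧ IsConnected U₁ ∧ IsConnected U₂ ∧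
      U₁ ∩ U₂ = ∅ ∧ U₁ ∪ U₂ = P ∧
      (fun p : V × V => (p.1, -p.2)) '' U₁ = U₂ ∧
      (fun p : V × V => (p.1, -p.2)) '' U₂ = U₁ ∧
      ∃ h : ↥U₁ ≃ₜ ↥U₂, ∀ p : ↥U₁, (h p : V × V) = ((p : V × V).1, -(p : V × V).2) :=
  stmt9_general n form hsymm hsig P hP
end

section
/- Let Δ ⊆ V be any subset and let P₀ = {℧ ∈ P(V) : ⟨℧,δ⟩ ≠ 0 for all δ ∈ Δ} (P(V) with the hyperplanes δ^⊥ removed). Then for every ℧ ∈ P₀ the loop γ : [0,1] → V ⊗ ℂ, γ(t) = (cos 2πt + i·sin 2πt)·℧, takes values in P₀, and its homotopy class has infinite order in the fundamental group π₁(P₀, ℧). (In particular the ℂ*-loop maps injectively from π₁ of a component of P(V) into π₁ of the hyperplane complement, the key step in comparing the stability manifolds of an Abelian surface and its Kummer surface.) -/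
/-!
Fix a positive basis vector `e`. The pairing `℧ ↦ ⟨℧, e⟩` never vanishes on `P(V)`: otherwise some
nonzero real combination of `Re ℧` and `Im ℧` would be orthogonal to both positive basis vectors,
hence of nonpositive norm, although it lies in a positive definite plane. Being `ℂ`-linear, the
pairing maps the `ℂ*`-loop to `t ↦ e^{2πit} ⟨℧, e⟩`, which winds once around `0`. Through the
monodromy of the covering `exp : ℂ → ℂ*`, the `k`-th power of the loop therefore translates the
fibre by `2πik`, so it is nontrivial for `k ≠ 0`.
-/

open scoped Real
open Complex

theorem Equiv.Perm.zpow_apply_eq_add_zsmul {S A : Type*} [AddCommGroup A] (f : Equiv.Perm S)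
    (g : S → A) (c : A) (h : ∀ s, g (f s) = g s + c) (k : ℤ) (s : S) :
    g ((f ^ k) s) = g s + k • c := by
  induction k using Int.induction_on generalizing s with
  | zero => simp
  | succ k ih => rw [zpow_add_one, Perm.mul_apply, ih, h, add_zsmul, one_zsmul]; abel
  | pred k ih =>
    have h' : g (f⁻¹ s) = g s - c := by rw [eq_sub_iff_add_eq, ← h]; simp
    rw [zpow_sub_one, Perm.mul_apply, ih, h', sub_zsmul, one_zsmul]; abel

theorem Complex.exp_monodromy_eq_add_two_pi_I {w : {z : ℂ // z ≠ 0}} (γ : Path w w)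
    (hγ : ∀ t : unitInterval, (γ t : ℂ) = cexp (2 * π * I * (t : ℝ)) * w)
    (e : (fun z : ℂ ↦ (⟨cexp z, z.exp_ne_zero⟩ : {z : ℂ // z ≠ 0})) ⁻¹' {w}) :
    (isCoveringMap_exp.monodromy (.mk γ) e : ℂ) = e + 2 * π * I := by
  have he : cexp e = w := congrArg Subtype.val e.2
  have hlift : (fun t : unitInterval => (e : ℂ) + 2 * π * I * (t : ℝ)) =
      isCoveringMap_exp.liftPath γ e (γ.source.trans e.2.symm) := by
    rw [IsCoveringMap.eq_liftPath_iff]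
    refine ⟨by fun_prop, funext fun t => Subtype.ext ?_, by simp⟩
    simp [hγ, exp_add, he, mul_comm]
  change isCoveringMap_exp.liftPath γ e _ 1 = _
  simpa using (congrFun hlift 1).symm

theorem FundamentalGroup.zpow_fromPath_ne_one_of_winding_number_one {X : Type*}
    [TopologicalSpace X] {x : X} (f : C(X, {z : ℂ // z ≠ 0})) (γ : Path x x)
    (hγ : ∀ t : unitInterval, (f (γ t) : ℂ) = cexp (2 * π * I * (t : ℝ)) * f x)
    {k : ℤ} (hk : k ≠ 0) : fromPath (.mk γ) ^ k ≠ 1 := by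
  let φ := (isCoveringMap_exp.monodromyPerm (f x)).comp (map f x)
  have hshift : ∀ e, (φ (fromPath (.mk γ)) e : ℂ) = e + 2 * π * I :=
    exp_monodromy_eq_add_two_pi_I (γ.map f.continuous) hγ
  let e₀ : (fun z : ℂ ↦ (⟨cexp z, z.exp_ne_zero⟩ : {z : ℂ // z ≠ 0})) ⁻¹' {f x} :=
    ⟨log (f x), Subtype.ext (exp_log (f x).2)⟩
  intro hone
  have := Equiv.Perm.zpow_apply_eq_add_zsmul _ _ _ hshift k e₀
  rw [← map_zpow, hone, map_one] at this
  simp [hk] at this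

lemma exists_ne_zero_mul_add_mul_eq_zero {R : Type*} [CommRing R] [Nontrivial R] (a b : R) :
    ∃ l m : R, (l ≠ 0 ∨ m ≠ 0) ∧ l * a + m * b = 0 := by
  rcases eq_or_ne a 0 with rfl | ha
  · exact ⟨1, 0, by simp⟩
  · exact ⟨b, -a, .inr (neg_ne_zero.mpr ha), by ring⟩

section Pairs

variable {V : Type*} [AddCommGroup V] [Module ℝ V]

/-- Multiplication by `e^{iθ}` on `V ⊗ ℂ`, whose elements `x + iy` are encoded as
pairs `(x, y)`. -/
noncomputable def rotate (θ : ℝ) (p : V × V) : V × V :=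
  (Real.cos θ • p.1 - Real.sin θ • p.2, Real.sin θ • p.1 + Real.cos θ • p.2)

@[simp] lemma rotate_zero (p : V × V) : rotate 0 p = p := by simp [rotate]

@[simp] lemma rotate_two_pi (p : V × V) : rotate (2 * π) p = p := by simp [rotate]

variable (form : V →ₗ[ℝ] V →ₗ[ℝ] ℝ)

/-- The `ℂ`-bilinear extension `⟨x + iy, v⟩` of `form`. -/
noncomputable def pairing (p : V × V) (v : V) : ℂ := form p.1 v + form p.2 v * I

lemma pairing_ne_zero_iff {p : V × V} {v : V} :
    pairing form p v ≠ 0 ↔ form p.1 v ≠ 0 ∨ form p.2 v ≠ 0 := by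
  rw [Ne, Complex.ext_iff, not_and_or]
  simp [pairing]

lemma pairing_rotate (θ : ℝ) (p : V × V) (v : V) :
    pairing form (rotate θ p) v = cexp (θ * I) * pairing form p v := by
  rw [exp_mul_I]
  simp only [pairing, rotate, map_add, map_sub, map_smul, LinearMap.add_apply,
    LinearMap.sub_apply, LinearMap.smul_apply, smul_eq_mul]
  push_cast
  linear_combination -(sin (θ : ℂ) * form p.2 v) * I_sq

/-- `P(V)`: the pairs `(x, y)` spanning a positive definite plane. -/
def periodDomain : Set (V × V) :=
  {p | 0 < form p.1 p.1 ∧ 0 < form p.1 p.1 * form p.2 p.2 - form p.1 p.2 ^ 2}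

variable {form}

lemma form_smul_add_smul (hsymm : ∀ x y, form x y = form y x) (a b c d : ℝ) (x y : V) :
    form (a • x + b • y) (c • x + d • y) =
      a * c * form x x + (a * d + b * c) * form x y + b * d * form y y := by
  simp only [map_add, map_smul, LinearMap.add_apply, LinearMap.smul_apply, smul_eq_mul,
    hsymm y x]
  ring

lemma form_smul_add_smul_self_pos (hsymm : ∀ x y, form x y = form y x) {p : V × V}
    (hp : p ∈ periodDomain form) {a b : ℝ} (hab : a ≠ 0 ∨ b ≠ 0) :
    0 < form (a • p.1 + b • p.2) (a • p.1 + b • p.2) := by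
  obtain ⟨hA, hG⟩ := hp
  rw [form_smul_add_smul hsymm]
  have key : form p.1 p.1 * (a * a * form p.1 p.1 + (a * b + b * a) * form p.1 p.2 +
      b * b * form p.2 p.2) = (a * form p.1 p.1 + b * form p.1 p.2) ^ 2 +
      b ^ 2 * (form p.1 p.1 * form p.2 p.2 - form p.1 p.2 ^ 2) := by ring
  refine pos_of_mul_pos_right (key ▸ ?_) hA.le
  rcases eq_or_ne b 0 with rfl | hb
  · have : a * form p.1 p.1 ≠ 0 := mul_ne_zero (by simpa using hab) hA.ne'
    rw [zero_mul, add_zero, zero_pow two_ne_zero, zero_mul, add_zero]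
    positivity
  · positivity

lemma rotate_mem_periodDomain (hsymm : ∀ x y, form x y = form y x) {p : V × V}
    (hp : p ∈ periodDomain form) (θ : ℝ) : rotate θ p ∈ periodDomain form := by
  have hcs := Real.cos_sq_add_sin_sq θ
  have hrot : rotate θ p = (Real.cos θ • p.1 + (-Real.sin θ) • p.2,
      Real.sin θ • p.1 + Real.cos θ • p.2) := by
    simp [rotate, sub_eq_add_neg]
  have hcs0 : Real.cos θ ≠ 0 ∨ -Real.sin θ ≠ 0 := by
    by_contra! h
    simp_all
  rw [hrot]
  refine ⟨form_smul_add_smul_self_pos hsymm hp hcs0, ?_⟩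
  simp only [form_smul_add_smul hsymm]
  convert hp.2 using 1
  linear_combination (form p.1 p.1 * form p.2 p.2 - form p.1 p.2 ^ 2) *
    (Real.cos θ ^ 2 + Real.sin θ ^ 2 + 1) * hcs

lemma form_self_nonpos_of_orthogonal {ι κ : Type*} [Fintype ι] [Fintype κ]
    (b : Module.Basis (ι ⊕ κ) ℝ V) (horth : ∀ i j, i ≠ j → form (b i) (b j) = 0)
    (hneg : ∀ j, form (b (.inr j)) (b (.inr j)) ≤ 0) {u : V}
    (hu : ∀ i, form u (b (.inl i)) = 0) : form u u ≤ 0 := by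
  have hcoord : ∀ j, form u (b j) = b.repr u j * form (b j) (b j) := by
    intro j
    conv_lhs => rw [← b.sum_repr u]
    simp only [map_sum, map_smul, LinearMap.sum_apply, LinearMap.smul_apply, smul_eq_mul]
    exact Finset.sum_eq_single j (fun i _ hij => by rw [horth i j hij, mul_zero]) (by simp)
  have hexp : form u u = ∑ j, b.repr u j * form u (b j) := by
    conv_lhs => arg 2; rw [← b.sum_repr u]
    simp only [map_sum, map_smul, smul_eq_mul]
  rw [hexp, Fintype.sum_sum_type]
  simp only [hu, mul_zero, Finset.sum_const_zero, zero_add]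
  refine Finset.sum_nonpos fun j _ => ?_
  rw [hcoord, ← mul_assoc]
  exact mul_nonpos_of_nonneg_of_nonpos (mul_self_nonneg _) (hneg j)

lemma pairing_ne_zero_of_mem_periodDomain (hsymm : ∀ x y, form x y = form y x)
    {κ : Type*} [Fintype κ] (b : Module.Basis (Fin 2 ⊕ κ) ℝ V)
    (horth : ∀ i j, i ≠ j → form (b i) (b j) = 0)
    (hneg : ∀ j, form (b (.inr j)) (b (.inr j)) ≤ 0) {p : V × V}
    (hp : p ∈ periodDomain form) : pairing form p (b (.inl 0)) ≠ 0 := by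
  rw [pairing_ne_zero_iff]
  by_contra! h
  obtain ⟨l, m, hlm, he₂⟩ :=
    exists_ne_zero_mul_add_mul_eq_zero (form p.1 (b (.inl 1))) (form p.2 (b (.inl 1)))
  have hu : ∀ i, form (l • p.1 + m • p.2) (b (.inl i)) = 0 := by
    simp only [Fin.forall_fin_two, map_add, map_smul, LinearMap.add_apply,
      LinearMap.smul_apply, smul_eq_mul, h.1, h.2]
    exact ⟨by ring, he₂⟩
  exact (form_smul_add_smul_self_pos hsymm hp hlm).not_ge
    (form_self_nonpos_of_orthogonal b horth hneg hu)

end Pairs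

lemma continuous_pairing {V : Type*} [NormedAddCommGroup V] [NormedSpace ℝ V]
    [FiniteDimensional ℝ V] (form : V →ₗ[ℝ] V →ₗ[ℝ] ℝ) (v : V) :
    Continuous fun p : V × V => pairing form p v := by
  have h : Continuous fun x : V => form x v := (form.flip v).continuous_of_finiteDimensional
  unfold pairing
  fun_prop

theorem stmt13_general
    {V : Type*} [NormedAddCommGroup V] [NormedSpace ℝ V] [FiniteDimensional ℝ V]
    (n : ℕ)
    (form : V →ₗ[ℝ] V →ₗ[ℝ] ℝ)
    (hsymm : ∀ x y : V, form x y = form y x)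
    (hsig : ∃ b : Module.Basis (Fin 2 ⊕ Fin n) ℝ V,
      (∀ i j, i ≠ j → form (b i) (b j) = 0) ∧
      (∀ i : Fin 2, 0 < form (b (Sum.inl i)) (b (Sum.inl i))) ∧
      (∀ j : Fin n, form (b (Sum.inr j)) (b (Sum.inr j)) < 0))
    (Δ : Set V)
    (P₀ : Set (V × V))
    (hP₀ : P₀ = {p : V × V | (0 < form p.1 p.1 ∧
        0 < form p.1 p.1 * form p.2 p.2 - (form p.1 p.2) ^ 2) ∧
      ∀ δ ∈ Δ, form p.1 δ ≠ 0 ∨ form p.2 δ ≠ 0})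
    (℧ : V × V) (h℧ : ℧ ∈ P₀) :
    (∀ t : ℝ,
      ((Real.cos (2 * π * t) • ℧.1 - Real.sin (2 * π * t) • ℧.2,
        Real.sin (2 * π * t) • ℧.1 + Real.cos (2 * π * t) • ℧.2) : V × V) ∈ P₀) ∧
    ∃ γ : Path (⟨℧, h℧⟩ : ↥P₀) ⟨℧, h℧⟩,
      (∀ t : unitInterval, (γ t : V × V) =
        (Real.cos (2 * π * t) • ℧.1 - Real.sin (2 * π * t) • ℧.2,
         Real.sin (2 * π * t) • ℧.1 + Real.cos (2 * π * t) • ℧.2)) ∧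
      ∀ k : ℤ, k ≠ 0 →
        (FundamentalGroup.fromPath (X := TopCat.of ↥P₀)
          (Quotient.mk (Path.Homotopic.setoid _ _) γ)) ^ k ≠ 1 := by
  obtain ⟨b, horth, -, hneg⟩ := hsig
  have hrotate : ∀ p ∈ P₀, ∀ θ, rotate θ p ∈ P₀ := by
    subst hP₀
    rintro p ⟨hp, hΔ⟩ θ
    refine ⟨rotate_mem_periodDomain hsymm hp θ, fun δ hδ => ?_⟩
    rw [← pairing_ne_zero_iff, pairing_rotate]
    exact mul_ne_zero (exp_ne_zero _) ((pairing_ne_zero_iff form).mpr (hΔ δ hδ))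
  have hW : ∀ p ∈ P₀, pairing form p (b (.inl 0)) ≠ 0 := by
    subst hP₀
    exact fun p hp => pairing_ne_zero_of_mem_periodDomain hsymm b horth (fun j => (hneg j).le) hp.1
  let W : C(P₀, {z : ℂ // z ≠ 0}) :=
    ⟨fun p => ⟨pairing form p (b (.inl 0)), hW p p.2⟩,
      ((continuous_pairing form _).comp continuous_subtype_val).subtype_mk _⟩
  let γ : Path (⟨℧, h℧⟩ : P₀) ⟨℧, h℧⟩ :=
    { toFun t := ⟨rotate (2 * π * t) ℧, hrotate ℧ h℧ _⟩
      continuous_toFun := by unfold rotate; fun_prop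
      source' := by simp
      target' := by simp }
  refine ⟨fun t => hrotate ℧ h℧ (2 * π * t), γ, fun t => rfl, fun k hk => ?_⟩
  refine FundamentalGroup.zpow_fromPath_ne_one_of_winding_number_one W γ (fun t => ?_) hk
  change pairing form (rotate _ ℧) _ = _ * pairing form ℧ _
  rw [pairing_rotate]
  push_cast
  ring_nf

/-- Let `V` have signature `(2,n)`, `n ≥ 1`, let `Δ ⊆ V`, and let
`P₀ = {℧ ∈ P(V) : ⟨℧,δ⟩ ≠ 0 for all δ ∈ Δ}` be the hyperplane complement inside
`P(V) ⊆ V ⊗ ℂ ≅ V × V`.  Then for every `℧ ∈ P₀` the `ℂ*`-loop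
`t ↦ e^{2πit}·℧` takes values in `P₀`, and its homotopy class has infinite order in
`π₁(P₀, ℧)`. -/
theorem stmt13
    {V : Type*} [NormedAddCommGroup V] [NormedSpace ℝ V] [FiniteDimensional ℝ V]
    (n : ℕ) (hn : 1 ≤ n)
    (form : V →ₗ[ℝ] V →ₗ[ℝ] ℝ)
    (hsymm : ∀ x y : V, form x y = form y x)
    (hsig : ∃ b : Module.Basis (Fin 2 ⊕ Fin n) ℝ V,
      (∀ i j, i ≠ j → form (b i) (b j) = 0) ∧
      (∀ i : Fin 2, 0 < form (b (Sum.inl i)) (b (Sum.inl i))) ∧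
      (∀ j : Fin n, form (b (Sum.inr j)) (b (Sum.inr j)) < 0))
    (Δ : Set V)
    (P₀ : Set (V × V))
    (hP₀ : P₀ = {p : V × V | (0 < form p.1 p.1 ∧
        0 < form p.1 p.1 * form p.2 p.2 - (form p.1 p.2) ^ 2) ∧
      ∀ δ ∈ Δ, form p.1 δ ≠ 0 ∨ form p.2 δ ≠ 0})
    (℧ : V × V) (h℧ : ℧ ∈ P₀) :
    (∀ t : ℝ,
      ((Real.cos (2 * π * t) • ℧.1 - Real.sin (2 * π * t) • ℧.2,
        Real.sin (2 * π * t) • ℧.1 + Real.cos (2 * π * t) • ℧.2) : V × V) ∈ P₀) ∧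
    ∃ γ : Path (⟨℧, h℧⟩ : ↥P₀) ⟨℧, h℧⟩,
      (∀ t : unitInterval, (γ t : V × V) =
        (Real.cos (2 * π * t) • ℧.1 - Real.sin (2 * π * t) • ℧.2,
         Real.sin (2 * π * t) • ℧.1 + Real.cos (2 * π * t) • ℧.2)) ∧
      ∀ k : ℤ, k ≠ 0 →
        (FundamentalGroup.fromPath (X := TopCat.of ↥P₀)
          (Quotient.mk (Path.Homotopic.setoid _ _) γ)) ^ k ≠ 1 :=
  stmt13_general n form hsymm hsig Δ P₀ hP₀ ℧ h℧
end
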